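/- Let g ∈ {4,5}. If a graph G belongs to both F^g_{i,j,k} and F_{i',j'} for nonnegative integers i, j, k, i', j' with i ≥ 1, j ≤ i, 1 ≤ i' ≤ 4, and j' ≤ i', then max{1 − t_g + j(1 − 5t_g) − i·t_g, 0} = max{1 + j'(1 − 5t_g) − i'·t_g, 0}. -/

import Mathlib

open SimpleGraph

namespace InducedForest

/-- A graph is subcubic if every vertex has at most 3 neighbours. -/
def Subcubic {V : Type} (G : SimpleGraph V) : Prop := ∀ v : V, (G.neighborSet v).ncard ≤ 3

/-- A graph is cubic if every vertex has exactly 3 neighbours. -/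
def Cubic {V : Type} (G : SimpleGraph V) : Prop := ∀ v : V, (G.neighborSet v).ncard = 3

/-- `S` is a feedback vertex set of `G` iff `G - S` is a forest. -/
def IsFVS {V : Type} (G : SimpleGraph V) (S : Set V) : Prop := (G.induce Sᶜ).IsAcyclic

/-- `φ(G)`: the minimum size of a feedback vertex set of `G`. -/
noncomputable def fvs {V : Type} (G : SimpleGraph V) : ℕ :=
  sInf {n : ℕ | ∃ S : Set V, IsFVS G S ∧ S.ncard = n}

/-- `a(G)`: the maximum number of vertices of an induced forest in `G`. -/
noncomputable def indForestNum {V : Type} (G : SimpleGraph V) : ℕ :=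
  sSup {n : ℕ | ∃ S : Set V, (G.induce S).IsAcyclic ∧ S.ncard = n}

/-- `v` is a cut-vertex of `G`: deleting it increases the number of connected components. -/
def IsCutVertex {V : Type} (G : SimpleGraph V) (v : V) : Prop :=
  Nat.card G.ConnectedComponent < Nat.card (G.induce {u | u ≠ v}).ConnectedComponent

/-- `B` is a block of `G`: a maximal set of vertices inducing a connected subgraph
without cut-vertices. -/
def IsBlock {V : Type} (G : SimpleGraph V) (B : Set V) : Prop :=
  ((G.induce B).Connected ∧ ∀ v, ¬ IsCutVertex (G.induce B) v) ∧
  ∀ B' : Set V, B ⊆ B' →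
    ((G.induce B').Connected ∧ ∀ v, ¬ IsCutVertex (G.induce B') v) → B' = B

/-- 2-connectedness: at least 3 vertices and removing fewer than 2 vertices
leaves a connected graph. -/
def TwoConnected {V : Type} (G : SimpleGraph V) : Prop :=
  3 ≤ Nat.card V ∧ ∀ s : Set V, s.ncard < 2 → (G.induce sᶜ).Connected

/-- 3-connectedness: at least 4 vertices and removing fewer than 3 vertices
leaves a connected graph. -/
def ThreeConnected {V : Type} (G : SimpleGraph V) : Prop :=
  4 ≤ Nat.card V ∧ ∀ s : Set V, s.ncard < 3 → (G.induce sᶜ).Connected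

/-- The graph obtained from `H` by subdividing the edge `xy` once;
the subdivision vertex is `none`. -/
def subdivide {V : Type} (H : SimpleGraph V) (x y : V) : SimpleGraph (Option V) :=
  SimpleGraph.fromRel (fun p q =>
    match p, q with
    | some u, some v => H.Adj u v ∧ s(u, v) ≠ s(x, y)
    | some u, none => u = x ∨ u = y
    | _, _ => False)

/-- `G` is obtained from `H` by subdividing one edge once. -/
def IsSubdivisionOfOneEdge {V W : Type} (H : SimpleGraph V) (G : SimpleGraph W) : Prop :=
  ∃ x y : V, H.Adj x y ∧ Nonempty (G ≃g subdivide H x y)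

/-- The graph obtained from `K` by adding one new vertex (`none`)
joined to all vertices of `S`. -/
def addApex {V : Type} (K : SimpleGraph V) (S : Set V) : SimpleGraph (Option V) :=
  SimpleGraph.fromRel (fun p q =>
    match p, q with
    | some u, some v => K.Adj u v
    | some u, none => u ∈ S
    | _, _ => False)

/-- `G` is (isomorphic to) `H ∘ (e1, e2, a)`: subdivide `e1` and `e2` once each
(with `e1` subdivided twice if `e1 = e2`) and add a new vertex adjacent to `a` and to the
two subdivision vertices. -/
def IsCircOp {V W : Type} (H : SimpleGraph V) (e1 e2 : Sym2 V) (a : V)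
    (G : SimpleGraph W) : Prop :=
  (e1 ≠ e2 ∧ ∃ x1 y1 x2 y2 : V, e1 = s(x1, y1) ∧ e2 = s(x2, y2) ∧
    Nonempty (G ≃g addApex (subdivide (subdivide H x1 y1) (some x2) (some y2))
      {some (some a), some none, none})) ∨
  (e1 = e2 ∧ ∃ x y : V, e1 = s(x, y) ∧
    Nonempty (G ≃g addApex (subdivide (subdivide H x y) none (some y))
      {some (some a), some none, none}))

/-- The cycle of length `n` (for `n ≥ 3`). -/
def cyc (n : ℕ) : SimpleGraph (ZMod n) :=
  SimpleGraph.fromRel (fun u v => v = u + 1)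

/-- The families `F_{i,j}` of graphs (closed under isomorphism):
`F_{i,0} = {C_i}` for `i ≥ 3`; `F_{1,1} = {K_4}`; `F_{j,j}` for `j ≥ 2` is obtained from
`F_{j-1,j-1}` by subdividing one edge once and then applying the `∘` operation at the
subdivision vertex; and `F_{i,j}` for `i > j ≥ 1` is obtained from `F_{j,j}` by `i - j`
successive single-edge subdivisions. -/
inductive MemF : ℕ → ℕ → ∀ {V : Type}, SimpleGraph V → Prop
  | cycle {i : ℕ} (hi : 3 ≤ i) {V : Type} {G : SimpleGraph V}
      (h : Nonempty (G ≃g cyc i)) : MemF i 0 G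
  | k4 {V : Type} {G : SimpleGraph V}
      (h : Nonempty (G ≃g (⊤ : SimpleGraph (Fin 4)))) : MemF 1 1 G
  | circ {j : ℕ} (hj : 2 ≤ j) {V : Type} {H : SimpleGraph V}
      (hH : MemF (j - 1) (j - 1) H) {x y : V} (hxy : H.Adj x y)
      {e1 e2 : Sym2 (Option V)} (he1 : e1 ∈ (subdivide H x y).edgeSet)
      (he2 : e2 ∈ (subdivide H x y).edgeSet)
      {W : Type} {G : SimpleGraph W}
      (hG : IsCircOp (subdivide H x y) e1 e2 none G) : MemF j j G
  | subd {i j : ℕ} (hj : 1 ≤ j) {V : Type} {H : SimpleGraph V}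
      (hH : MemF i j H) {x y : V} (hxy : H.Adj x y) {W : Type} {G : SimpleGraph W}
      (hG : Nonempty (G ≃g subdivide H x y)) : MemF (i + 1) j G

/-- `K_4^+`: the graph obtained from `K_4` by subdividing one edge once. -/
def K4plus : SimpleGraph (Option (Fin 4)) :=
  subdivide (⊤ : SimpleGraph (Fin 4)) 0 1

/-- `L`: the graph obtained from `K_4` by subdividing once each edge
of a perfect matching. -/
def Lgraph : SimpleGraph (Option (Option (Fin 4))) :=
  subdivide (subdivide (⊤ : SimpleGraph (Fin 4)) 0 1) (some 2) (some 3)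

/-- The Petersen graph. -/
def petersen : SimpleGraph (ZMod 5 × Fin 2) :=
  SimpleGraph.fromRel (fun u v =>
    (u.2 = 0 ∧ v.2 = 0 ∧ v.1 = u.1 + 1) ∨
    (u.2 = 1 ∧ v.2 = 1 ∧ v.1 = u.1 + 2) ∨
    (u.2 = 0 ∧ v.2 = 1 ∧ u.1 = v.1))

/-- `R`: the Petersen graph minus one edge. -/
def Rgraph : SimpleGraph (ZMod 5 × Fin 2) :=
  petersen.deleteEdges {s(((0 : ZMod 5), (0 : Fin 2)), ((1 : ZMod 5), (0 : Fin 2)))}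

/-- `Q_3`: the 3-dimensional cube graph. -/
def Q3 : SimpleGraph (Fin 2 × Fin 2 × Fin 2) :=
  SimpleGraph.fromRel (fun u v =>
    (u.1 ≠ v.1 ∧ u.2 = v.2) ∨ (u.1 = v.1 ∧ u.2.1 ≠ v.2.1 ∧ u.2.2 = v.2.2) ∨
    (u.1 = v.1 ∧ u.2.1 = v.2.1 ∧ u.2.2 ≠ v.2.2))

/-- `V_8`: the Wagner graph. -/
def V8 : SimpleGraph (ZMod 8) :=
  SimpleGraph.fromRel (fun u v => v = u + 1 ∨ v = u + 4)

/-- The dodecahedron, presented as the generalized Petersen graph `GP(10,2)`. -/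
def dodecahedron : SimpleGraph (ZMod 10 × Fin 2) :=
  SimpleGraph.fromRel (fun u v =>
    (u.2 = 0 ∧ v.2 = 0 ∧ v.1 = u.1 + 1) ∨
    (u.2 = 1 ∧ v.2 = 1 ∧ v.1 = u.1 + 2) ∨
    (u.2 = 0 ∧ v.2 = 1 ∧ u.1 = v.1))

/-- The families `F^g_{i,j,k}`: 2-connected subcubic graphs obtained from the disjoint
union of `k` copies of `L` (when `g = 4`) or of `R` (when `g = 5`) and one member of
`F_{i,j}` by adding `k+1` edges; when `k ≥ 1`, each added edge joins two different
constituent copies. -/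
def MemFG (g i j k : ℕ) {W : Type} (G : SimpleGraph W) : Prop :=
  TwoConnected G ∧ Subcubic G ∧
  ∃ (P : W → Fin (k + 1)) (H : SimpleGraph W),
    H ≤ G ∧ (∀ u v, H.Adj u v → P u = P v) ∧
    MemF i j (H.induce (P ⁻¹' {0})) ∧
    ((g = 4 ∧ ∀ l : Fin (k + 1), l ≠ 0 → Nonempty ((H.induce (P ⁻¹' {l})) ≃g Lgraph)) ∨
     (g = 5 ∧ ∀ l : Fin (k + 1), l ≠ 0 → Nonempty ((H.induce (P ⁻¹' {l})) ≃g Rgraph))) ∧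
    (G.edgeSet \ H.edgeSet).ncard = k + 1 ∧
    (1 ≤ k → ∀ u v, G.Adj u v → ¬ H.Adj u v → P u ≠ P v)

/-- `t_4 = 2/9`, `t_5 = 1/5`. -/
noncomputable def tg (g : ℕ) : ℝ := if g = 4 then 2 / 9 else 1 / 5

/-- The error function `ε_g` on graphs. -/
noncomputable def eps (g : ℕ) {V : Type} (G : SimpleGraph V) : ℝ := by
  classical
  exact
    if h1 : ∃ p : ℕ × ℕ, 1 ≤ p.1 ∧ p.2 ≤ p.1 ∧ MemF p.1 p.2 G then
      max (1 - (h1.choose.2 : ℝ) * (5 * tg g - 1) - (h1.choose.1 : ℝ) * tg g) 0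
    else if h2 : ∃ q : ℕ × ℕ × ℕ, 1 ≤ q.1 ∧ q.2.1 ≤ q.1 ∧ MemFG g q.1 q.2.1 q.2.2 G then
      max (1 - tg g - (h2.choose.2.1 : ℝ) * (5 * tg g - 1) - (h2.choose.1 : ℝ) * tg g) 0
    else if Nonempty (G ≃g (⊤ : SimpleGraph (Fin 2))) then -tg g
    else 0

/-- The error function `r_g(G)`: the sum of `ε_g(B)` over all blocks `B` of `G`. -/
noncomputable def rg (g : ℕ) {V : Type} (G : SimpleGraph V) : ℝ :=
  ∑ᶠ B ∈ {B : Set V | IsBlock G B}, eps g (G.induce B)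

/-- `G` has two vertex-disjoint cycles, each of length less than `g`. -/
def TwoDisjointCyclesLt {V : Type} (G : SimpleGraph V) (g : ℕ) : Prop :=
  ∃ (u v : V) (c1 : G.Walk u u) (c2 : G.Walk v v), c1.IsCycle ∧ c2.IsCycle ∧
    c1.length < g ∧ c2.length < g ∧ ∀ x, x ∈ c1.support → x ∉ c2.support

/-- `G` contains a (not necessarily induced) subgraph isomorphic to `K`. -/
def ContainsSubgraphCopy {U V : Type} (K : SimpleGraph U) (G : SimpleGraph V) : Prop :=
  ∃ f : U → V, Function.Injective f ∧ ∀ u v, K.Adj u v → G.Adj (f u) (f v)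

/-- `G` is obtained from `H` by adding edges, each of which is a cut-edge of `G`. -/
def AddCutEdges {V : Type} (H G : SimpleGraph V) : Prop :=
  H ≤ G ∧ ∀ e ∈ G.edgeSet \ H.edgeSet, G.IsBridge e

/-- The edges of `H` all lie inside the parts of the partition given by `P`. -/
def PartitionedBy {V ι : Type} (H : SimpleGraph V) (P : V → ι) : Prop :=
  ∀ u v, H.Adj u v → P u = P v

/-- `G` is `g`-minimal: a minimum counterexample to the main theorem. -/
def GMinimal (g : ℕ) {V : Type} [Fintype V] (G : SimpleGraph V) : Prop :=
  Subcubic G ∧ ¬ TwoDisjointCyclesLt G g ∧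
  tg g * G.edgeSet.ncard + rg g G < (fvs G : ℝ) ∧
  ∀ (W : Type) [Fintype W] (H : SimpleGraph W), Nat.card W < Nat.card V →
    Subcubic H → ¬ TwoDisjointCyclesLt H g →
    (fvs H : ℝ) ≤ tg g * H.edgeSet.ncard + rg g H

/-!
Every member of `F_{i,j}` has `i + 3j` vertices and `i + 5j` edges: `C_i` and `K_4` do, a
subdivision adds one vertex and one edge, and the `∘` step adds three vertices and five edges
on top of the preliminary subdivision. Counting vertices and edges of `G` through both
descriptions gives two linear equations in `i, j, k, i', j'`; together with `i' ≤ 4` and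
`j' ≤ i'` they force `k = 1` and `(i', j') = (i, j + 2)` when `g = 4` (each copy of `L` has 6
vertices and 8 edges) and `(i', j') = (i + 1, j + 3)` when `g = 5` (each copy of `R` has 10
vertices and 14 edges). The two expressions then agree because `9 t_4 = 2` and `15 t_5 = 3`.
-/

variable {U V W : Type}

lemma ncard_edgeSet_eq_of_iso {G : SimpleGraph V} {G' : SimpleGraph W} (φ : G ≃g G') :
    G.edgeSet.ncard = G'.edgeSet.ncard := by
  rw [← Nat.card_coe_set_eq, ← Nat.card_coe_set_eq]
  exact Nat.card_congr φ.mapEdgeSet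

lemma ncard_edgeSet_eq_induce_compl_add_ncard_neighborSet [Finite V] (G : SimpleGraph V)
    (x : V) : G.edgeSet.ncard = (G.induce {x}ᶜ).edgeSet.ncard + (G.neighborSet x).ncard := by
  classical
  have := Fintype.ofFinite V
  have hdeg : G.degree x ≤ G.edgeFinset.card := by
    rw [← card_incidenceFinset_eq_degree]
    exact Finset.card_le_card (G.incidenceFinset_subset x)
  rw [← coe_edgeFinset, ← coe_edgeFinset, Set.ncard_coe_finset, Set.ncard_coe_finset,
    card_edgeFinset_induce_compl_singleton, card_edgeFinset_deleteIncidenceSet,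
    ← card_neighborSet_eq_degree, ← Nat.card_eq_fintype_card, Nat.card_coe_set_eq]
  rw [← card_neighborSet_eq_degree, ← Nat.card_eq_fintype_card, Nat.card_coe_set_eq] at hdeg
  omega

lemma ncard_edgeSet_option [Finite V] (G : SimpleGraph (Option V)) :
    G.edgeSet.ncard = (G.comap some).edgeSet.ncard + (G.neighborSet none).ncard := by
  rw [ncard_edgeSet_eq_induce_compl_add_ncard_neighborSet G none,
    (Set.isCompl_range_some_none V).symm.compl_eq]
  exact congrArg (· + _)
    (ncard_edgeSet_eq_of_iso (Embedding.comap Function.Embedding.some G).isoInduceRange).symm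

lemma comap_some_subdivide (H : SimpleGraph V) (x y : V) :
    (subdivide H x y).comap some = H.deleteEdges {s(x, y)} := by
  ext u v
  simp only [comap_adj, subdivide, fromRel_adj, deleteEdges_adj, Set.mem_singleton_iff]
  constructor
  · rintro ⟨-, h | ⟨h, hne⟩⟩
    · exact h
    · exact ⟨h.symm, by rwa [Sym2.eq_swap]⟩
  · rintro ⟨h, hne⟩
    exact ⟨by simpa using h.ne, Or.inl ⟨h, hne⟩⟩

lemma neighborSet_none_subdivide (H : SimpleGraph V) (x y : V) :
    (subdivide H x y).neighborSet none = {some x, some y} := by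
  ext (_ | u) <;> simp [subdivide, eq_comm]

lemma ncard_edgeSet_subdivide [Finite V] {H : SimpleGraph V} {x y : V} (hxy : H.Adj x y) :
    (subdivide H x y).edgeSet.ncard = H.edgeSet.ncard + 1 := by
  have hdel := Set.ncard_sdiff_singleton_add_one (H.mem_edgeSet.mpr hxy) (Set.toFinite _)
  rw [ncard_edgeSet_option, comap_some_subdivide, edgeSet_deleteEdges,
    neighborSet_none_subdivide, Set.ncard_pair (by simpa using hxy.ne)]
  omega

lemma comap_some_addApex (K : SimpleGraph V) (S : Set V) : (addApex K S).comap some = K := by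
  ext u v
  simp only [comap_adj, addApex, fromRel_adj]
  exact ⟨fun ⟨_, h⟩ => h.elim id K.adj_symm, fun h => ⟨by simpa using h.ne, Or.inl h⟩⟩

lemma neighborSet_none_addApex (K : SimpleGraph V) (S : Set V) :
    (addApex K S).neighborSet none = some '' S := by
  ext (_ | u) <;> simp [addApex]

lemma ncard_edgeSet_addApex [Finite V] (K : SimpleGraph V) (S : Set V) :
    (addApex K S).edgeSet.ncard = K.edgeSet.ncard + S.ncard := by
  rw [ncard_edgeSet_option, comap_some_addApex, neighborSet_none_addApex,
    Set.ncard_image_of_injective _ (Option.some_injective V)]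

lemma ncard_edgeSet_cyc {n : ℕ} (hn : 3 ≤ n) : (cyc n).edgeSet.ncard = n := by
  classical
  have : NeZero n := ⟨by omega⟩
  have hcast : ∀ k : ℕ, 0 < k → k < n → (k : ZMod n) ≠ 0 := fun k hk hkn h =>
    absurd (Nat.le_of_dvd hk ((ZMod.natCast_eq_zero_iff k n).mp h)) (by omega)
  have h1 : (1 : ZMod n) ≠ 0 := by exact_mod_cast hcast 1 one_pos (by omega)
  have h2 : (2 : ZMod n) ≠ 0 := by exact_mod_cast hcast 2 two_pos (by omega)
  have hN : ∀ u, (cyc n).neighborSet u = {u + 1, u - 1} := by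
    intro u
    ext v
    simp only [mem_neighborSet, cyc, fromRel_adj, Set.mem_insert_iff, Set.mem_singleton_iff]
    constructor
    · rintro ⟨-, h | h⟩
      · exact Or.inl h
      · exact Or.inr (eq_sub_of_add_eq h.symm)
    · rintro (rfl | rfl)
      · exact ⟨fun h => h1 (by linear_combination -h), Or.inl rfl⟩
      · exact ⟨fun h => h1 (by linear_combination h), Or.inr (sub_add_cancel u 1).symm⟩
  have hdeg : ∀ u, (cyc n).degree u = 2 := fun u => by
    rw [← card_neighborSet_eq_degree, ← Nat.card_eq_fintype_card, Nat.card_coe_set_eq, hN,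
      Set.ncard_pair fun h => h2 (by linear_combination h)]
  have hsum := sum_degrees_eq_twice_card_edges (cyc n)
  simp only [hdeg, Finset.sum_const, Finset.card_univ, ZMod.card, smul_eq_mul] at hsum
  rw [← coe_edgeFinset, Set.ncard_coe_finset]
  omega

lemma ncard_edgeSet_top_fin_four : (⊤ : SimpleGraph (Fin 4)).edgeSet.ncard = 6 := by
  rw [← coe_edgeFinset, Set.ncard_coe_finset, card_edgeFinset_top_eq_card_choose_two]
  rfl

lemma IsCircOp.card_eq [Finite V] {H : SimpleGraph V} {e1 e2 : Sym2 V} {a : V}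
    {G : SimpleGraph W} (he1 : e1 ∈ H.edgeSet) (he2 : e2 ∈ H.edgeSet) (h : IsCircOp H e1 e2 a G) :
    Finite W ∧ Nat.card W = Nat.card V + 3 ∧ G.edgeSet.ncard = H.edgeSet.ncard + 5 := by
  have hapex : ∀ b : V,
      ({some (some b), some none, none} : Set (Option (Option V))).ncard = 3 := fun b => by
    rw [Set.ncard_insert_of_notMem (by simp), Set.ncard_pair (by simp)]
  rcases h with ⟨hne, x1, y1, x2, y2, rfl, rfl, ⟨φ⟩⟩ | ⟨rfl, x, y, rfl, ⟨φ⟩⟩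
  · have hadj : (subdivide H x1 y1).Adj (some x2) (some y2) := by
      simp only [subdivide, fromRel_adj]
      exact ⟨by simpa using he2.ne, Or.inl ⟨he2, hne.symm⟩⟩
    refine ⟨Finite.of_equiv _ φ.toEquiv.symm, (Nat.card_congr φ.toEquiv).trans ?_,
      (ncard_edgeSet_eq_of_iso φ).trans ?_⟩
    · simp only [Finite.card_option]
    · rw [ncard_edgeSet_addApex, hapex, ncard_edgeSet_subdivide hadj, ncard_edgeSet_subdivide he1]
  · have hadj : (subdivide H x y).Adj none (some y) := by simp [subdivide]
    refine ⟨Finite.of_equiv _ φ.toEquiv.symm, (Nat.card_congr φ.toEquiv).trans ?_,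
      (ncard_edgeSet_eq_of_iso φ).trans ?_⟩
    · simp only [Finite.card_option]
    · rw [ncard_edgeSet_addApex, hapex, ncard_edgeSet_subdivide hadj, ncard_edgeSet_subdivide he1]

lemma MemF.card_eq {i j : ℕ} {G : SimpleGraph W} (h : MemF i j G) :
    Finite W ∧ Nat.card W = i + 3 * j ∧ G.edgeSet.ncard = i + 5 * j := by
  induction h with
  | @cycle n hn _ _ h =>
    obtain ⟨φ⟩ := h
    have : NeZero n := ⟨by omega⟩
    exact ⟨Finite.of_equiv _ φ.toEquiv.symm, (Nat.card_congr φ.toEquiv).trans (by simp),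
      (ncard_edgeSet_eq_of_iso φ).trans (ncard_edgeSet_cyc hn)⟩
  | k4 h =>
    obtain ⟨φ⟩ := h
    exact ⟨Finite.of_equiv _ φ.toEquiv.symm, (Nat.card_congr φ.toEquiv).trans (by simp),
      (ncard_edgeSet_eq_of_iso φ).trans ncard_edgeSet_top_fin_four⟩
  | circ _ _ hxy he1 he2 hG ih =>
    obtain ⟨_, hV, hE⟩ := ih
    obtain ⟨hfinW, hW, hEW⟩ := hG.card_eq he1 he2
    refine ⟨hfinW, ?_, ?_⟩
    · rw [hW, Finite.card_option, hV]
      omega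
    · rw [hEW, ncard_edgeSet_subdivide hxy, hE]
      omega
  | subd _ _ hxy hG ih =>
    obtain ⟨_, hV, hE⟩ := ih
    obtain ⟨φ⟩ := hG
    refine ⟨Finite.of_equiv _ φ.toEquiv.symm, (Nat.card_congr φ.toEquiv).trans ?_,
      (ncard_edgeSet_eq_of_iso φ).trans ?_⟩
    · rw [Finite.card_option, hV]
      omega
    · rw [ncard_edgeSet_subdivide hxy, hE]
      omega

lemma natCard_eq_sum_ncard_fiber [Finite V] {ι : Type} [Fintype ι] (P : V → ι) :
    Nat.card V = ∑ l, (P ⁻¹' {l}).ncard := by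
  classical
  have := Fintype.ofFinite V
  rw [Nat.card_eq_fintype_card, ← Finset.card_univ,
    Finset.card_eq_sum_card_fiberwise fun x _ => Finset.mem_univ (P x)]
  refine Finset.sum_congr rfl fun l _ => ?_
  rw [Set.ncard_eq_toFinset_card']
  congr 1
  ext v
  simp

lemma ncard_edgeSet_eq_sum_ncard_edgeSet_induce_fiber [Finite V] {ι : Type} [Fintype ι]
    {H : SimpleGraph V} {P : V → ι} (hP : PartitionedBy H P) :
    H.edgeSet.ncard = ∑ l, (H.induce (P ⁻¹' {l})).edgeSet.ncard := by
  classical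
  have := Fintype.ofFinite V
  have hedge : ∀ e ∈ H.edgeSet, ∀ v ∈ e, P v = P e.out.1 := by
    intro e he v hv
    induction e using Sym2.ind with
    | _ a b =>
      have hab := hP a b he
      have hout := Sym2.mem_iff.mp (Sym2.out_fst_mem s(a, b))
      rcases Sym2.mem_iff.mp hv with rfl | rfl <;> rcases hout with h | h <;> rw [h]
      exacts [hab, hab.symm]
  rw [← coe_edgeFinset, Set.ncard_coe_finset, Finset.card_eq_sum_card_fiberwise
    (f := fun e => P e.out.1) (t := Finset.univ) fun _ _ => Finset.mem_univ _]
  refine Finset.sum_congr rfl fun l _ => ?_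
  rw [← coe_edgeFinset, Set.ncard_coe_finset,
    ← Finset.card_map (Function.Embedding.subtype (· ∈ P ⁻¹' {l})).sym2Map, map_edgeFinset_induce]
  congr 1
  ext e
  simp only [Finset.mem_filter, Finset.mem_inter, Finset.mem_sym2_iff, Set.mem_toFinset,
    Set.mem_preimage, Set.mem_singleton_iff, mem_edgeFinset]
  refine and_congr_right fun he => ⟨fun hl v hv => (hedge e he v hv).trans hl, fun hall => ?_⟩
  exact hall _ (Sym2.out_fst_mem e)

lemma ncard_edgeSet_Lgraph : Lgraph.edgeSet.ncard = 8 := by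
  have h01 : (⊤ : SimpleGraph (Fin 4)).Adj 0 1 := by decide
  have h23 : (subdivide (⊤ : SimpleGraph (Fin 4)) 0 1).Adj (some 2) (some 3) := by
    simp only [subdivide, fromRel_adj]
    decide
  rw [Lgraph, ncard_edgeSet_subdivide h23, ncard_edgeSet_subdivide h01, ncard_edgeSet_top_fin_four]

instance : DecidableRel petersen.Adj := fun _ _ => decidable_of_iff _ (fromRel_adj ..).symm

instance : DecidableRel Rgraph.Adj := fun _ _ => decidable_of_iff _ (deleteEdges_adj ..).symm

lemma ncard_edgeSet_Rgraph : Rgraph.edgeSet.ncard = 14 := by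
  rw [Set.ncard_eq_toFinset_card']
  decide

lemma card_eq_of_partition {i j k : ℕ} [Finite V] {G H : SimpleGraph V} {K : SimpleGraph U}
    {P : V → Fin (k + 1)} (hHG : H ≤ G) (hP : PartitionedBy H P)
    (h0 : MemF i j (H.induce (P ⁻¹' {0})))
    (hK : ∀ l : Fin (k + 1), l ≠ 0 → Nonempty (H.induce (P ⁻¹' {l}) ≃g K))
    (hextra : (G.edgeSet \ H.edgeSet).ncard = k + 1) :
    Nat.card V = i + 3 * j + k * Nat.card U ∧
      G.edgeSet.ncard = i + 5 * j + k * K.edgeSet.ncard + (k + 1) := by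
  obtain ⟨-, hV0, hE0⟩ := h0.card_eq
  have hGH := Set.ncard_sdiff_add_ncard_of_subset (edgeSet_mono hHG) (Set.toFinite G.edgeSet)
  have hKV : ∀ l : Fin k, (P ⁻¹' {l.succ}).ncard = Nat.card U := fun l => by
    obtain ⟨φ⟩ := hK l.succ (Fin.succ_ne_zero l)
    rw [← Nat.card_coe_set_eq, Nat.card_congr φ.toEquiv]
  have hKE : ∀ l : Fin k, (H.induce (P ⁻¹' {l.succ})).edgeSet.ncard = K.edgeSet.ncard :=
    fun l => ncard_edgeSet_eq_of_iso (hK l.succ (Fin.succ_ne_zero l)).some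
  rw [Nat.card_coe_set_eq] at hV0
  constructor
  · rw [natCard_eq_sum_ncard_fiber P, Fin.sum_univ_succ]
    simp only [hV0, hKV, Finset.sum_const, Finset.card_univ, Fintype.card_fin, smul_eq_mul]
  · rw [← hGH, hextra, ncard_edgeSet_eq_sum_ncard_edgeSet_induce_fiber hP, Fin.sum_univ_succ]
    simp only [hE0, hKE, Finset.sum_const, Finset.card_univ, Fintype.card_fin, smul_eq_mul]
    omega

lemma MemFG.card_eq {g i j k : ℕ} [Finite V] {G : SimpleGraph V} (h : MemFG g i j k G) :
    (g = 4 ∧ Nat.card V = i + 3 * j + k * 6 ∧ G.edgeSet.ncard = i + 5 * j + k * 8 + (k + 1)) ∨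
    (g = 5 ∧ Nat.card V = i + 3 * j + k * 10 ∧
      G.edgeSet.ncard = i + 5 * j + k * 14 + (k + 1)) := by
  obtain ⟨-, -, P, H, hHG, hP, h0, hparts, hextra, -⟩ := h
  rcases hparts with ⟨hg, hL⟩ | ⟨hg, hR⟩
  · have hcount := card_eq_of_partition hHG hP h0 hL hextra
    rw [ncard_edgeSet_Lgraph] at hcount
    exact Or.inl ⟨hg, by simpa using hcount⟩
  · have hcount := card_eq_of_partition hHG hP h0 hR hextra
    rw [ncard_edgeSet_Rgraph] at hcount
    exact Or.inr ⟨hg, by simpa using hcount⟩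

theorem statement15_general (g : ℕ) (i j k i' j' : ℕ)
    (hi'4 : i' ≤ 4) (hj' : j' ≤ i')
    {V : Type} (G : SimpleGraph V)
    (h1 : MemFG g i j k G) (h2 : MemF i' j' G) :
    max (1 - tg g + (j : ℝ) * (1 - 5 * tg g) - (i : ℝ) * tg g) 0 =
      max (1 + (j' : ℝ) * (1 - 5 * tg g) - (i' : ℝ) * tg g) 0 := by
  obtain ⟨_, hV, hE⟩ := h2.card_eq
  rcases h1.card_eq with ⟨rfl, hV', hE'⟩ | ⟨rfl, hV', hE'⟩
  · obtain ⟨rfl, rfl⟩ : i' = i ∧ j' = j + 2 := by omega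
    congr 1
    norm_num [tg]
    ring
  · obtain ⟨rfl, rfl⟩ : i' = i + 1 ∧ j' = j + 3 := by omega
    congr 1
    norm_num [tg]
    ring

/-- well-definedness of the error terms on
`F^g_{i,j,k} ∩ F_{i',j'}`. -/
theorem statement15 (g : ℕ) (hg : g = 4 ∨ g = 5) (i j k i' j' : ℕ)
    (hi : 1 ≤ i) (hj : j ≤ i) (hi' : 1 ≤ i') (hi'4 : i' ≤ 4) (hj' : j' ≤ i')
    {V : Type} [Fintype V] (G : SimpleGraph V)
    (h1 : MemFG g i j k G) (h2 : MemF i' j' G) :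
    max (1 - tg g + (j : ℝ) * (1 - 5 * tg g) - (i : ℝ) * tg g) 0 =
      max (1 + (j' : ℝ) * (1 - 5 * tg g) - (i' : ℝ) * tg g) 0 :=
  statement15_general g i j k i' j' hi'4 hj' G h1 h2

end InducedForest
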